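/- Let D ⊆ ℤ≥0 be finite with at least two elements. The function φ(x) = x·Set_{D−1}(x)/Set_D(x) is strictly increasing on (0,∞), tends to min(D) as x → 0⁺ and to max(D) as x → ∞; consequently, for every t in the open interval (min(D), max(D)) there is a unique ζ > 0 with φ(ζ) = t. -/

import Mathlib

open Finset

/-- `φ(x) = x·Set_{D−1}(x)/Set_D(x)` where `Set_D(x) = Σ_{d∈D} x^d/d!` and
`Set_{D−1}(x) = Σ_{d∈D, d≥1} x^{d−1}/(d−1)!`. -/
noncomputable def phiD (D : Finset ℕ) (x : ℝ) : ℝ :=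
  x * (∑ d ∈ D.filter (fun d => 1 ≤ d), x ^ (d - 1) / Nat.factorial (d - 1)) /
    ∑ d ∈ D, x ^ d / Nat.factorial d

/-!
With `a_d = 1/d!`, `φ(x) = N(x)/S(x)` where `N(x) = Σ d a_d x^d` and `S(x) = Σ a_d x^d`: it is the
mean of `d ∈ D` under the weights `a_d x^d`. For `0 < x < y` the symmetrisation
`2 (N(y) S(x) − N(x) S(y)) = Σ_{d,e} a_d a_e (d − e)(y^d x^e − x^d y^e)` has nonnegative terms and
a positive one at `(d, e) = (max D, min D)`, so `φ` is strictly increasing.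
As `x → 0⁺` (resp. `x → ∞`) the weights concentrate on `min D` (resp. `max D`): dividing `N` and
`S` by `x^{min D}` (resp. `x^{max D}`) turns both into polynomials in `x` (resp. `x⁻¹`) that are
continuous at `0`. The intermediate value theorem and injectivity then solve `φ(ζ) = t`.
-/

open Filter Topology
open scoped Nat

noncomputable def tiltedMean (D : Finset ℕ) (a : ℕ → ℝ) (x : ℝ) : ℝ :=
  (∑ d ∈ D, d * a d * x ^ d) / ∑ d ∈ D, a d * x ^ d

theorem phiD_eq_tiltedMean (D : Finset ℕ) : phiD D = tiltedMean D (fun d => (d ! : ℝ)⁻¹) := by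
  funext x
  unfold phiD tiltedMean
  congr 1
  · rw [Finset.mul_sum]
    refine Eq.trans ?_ (Finset.sum_filter_of_ne (p := fun d => 1 ≤ d) ?_)
    · refine Finset.sum_congr rfl fun d hd => ?_
      obtain ⟨k, rfl⟩ := Nat.exists_eq_add_of_le' (Finset.mem_filter.mp hd).2
      simp only [Nat.add_sub_cancel, Nat.factorial_succ, pow_succ]
      push_cast
      field_simp
    · intro d _ hd
      contrapose! hd
      simp [Nat.lt_one_iff.mp hd]
  · exact Finset.sum_congr rfl fun d _ => by rw [div_eq_inv_mul]

theorem pow_mul_pow_lt_pow_mul_pow {x y : ℝ} (hx : 0 < x) (hxy : x < y) {d e : ℕ} (hed : e < d) :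
    x ^ d * y ^ e < y ^ d * x ^ e := by
  obtain ⟨k, rfl⟩ := Nat.exists_eq_add_of_lt hed
  have hy : 0 < y := hx.trans hxy
  have hk : x ^ (k + 1) < y ^ (k + 1) := pow_lt_pow_left₀ hxy hx.le k.succ_ne_zero
  calc x ^ (e + k + 1) * y ^ e = (x * y) ^ e * x ^ (k + 1) := by ring
    _ < (x * y) ^ e * y ^ (k + 1) := by gcongr
    _ = y ^ (e + k + 1) * x ^ e := by ring

theorem cast_sub_mul_pow_sub_pow_pos {x y : ℝ} (hx : 0 < x) (hxy : x < y) {d e : ℕ} (hde : d ≠ e) :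
    0 < ((d : ℝ) - e) * (y ^ d * x ^ e - x ^ d * y ^ e) := by
  rcases hde.lt_or_gt with hlt | hgt
  · have := pow_mul_pow_lt_pow_mul_pow hx hxy hlt
    have : (d : ℝ) < e := by exact_mod_cast hlt
    nlinarith
  · have := pow_mul_pow_lt_pow_mul_pow hx hxy hgt
    have : (e : ℝ) < d := by exact_mod_cast hgt
    nlinarith

theorem cast_sub_mul_pow_sub_pow_nonneg {x y : ℝ} (hx : 0 < x) (hxy : x < y) (d e : ℕ) :
    0 ≤ ((d : ℝ) - e) * (y ^ d * x ^ e - x ^ d * y ^ e) := by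
  rcases eq_or_ne d e with rfl | hde
  · simp
  · exact (cast_sub_mul_pow_sub_pow_pos hx hxy hde).le

section TiltedMean

variable {D : Finset ℕ} {a : ℕ → ℝ}

theorem sum_mul_pow_pos (hne : D.Nonempty) (ha : ∀ d ∈ D, 0 < a d) {x : ℝ} (hx : 0 < x) :
    0 < ∑ d ∈ D, a d * x ^ d :=
  Finset.sum_pos (fun d hd => by have := ha d hd; positivity) hne

theorem two_mul_cross_sub_eq_sum_sum (x y : ℝ) :
    2 * ((∑ d ∈ D, d * a d * y ^ d) * (∑ d ∈ D, a d * x ^ d) -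
        (∑ d ∈ D, d * a d * x ^ d) * (∑ d ∈ D, a d * y ^ d)) =
      ∑ d ∈ D, ∑ e ∈ D, a d * a e * (((d : ℝ) - e) * (y ^ d * x ^ e - x ^ d * y ^ e)) := by
  set g : ℕ → ℕ → ℝ := fun d e => d * a d * a e * (y ^ d * x ^ e - x ^ d * y ^ e)
  have hsplit : ∀ d e, a d * a e * (((d : ℝ) - e) * (y ^ d * x ^ e - x ^ d * y ^ e)) =
      g d e + g e d := fun d e => by simp only [g]; ring
  simp_rw [hsplit, Finset.sum_add_distrib]
  rw [Finset.sum_comm (f := fun d e => g e d), Finset.sum_mul_sum, Finset.sum_mul_sum,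
    ← Finset.sum_sub_distrib]
  simp_rw [← Finset.sum_sub_distrib]
  rw [two_mul]
  congr 1 <;> exact Finset.sum_congr rfl fun d _ => Finset.sum_congr rfl fun e _ => by ring

theorem tiltedMean_strictMonoOn (ha : ∀ d ∈ D, 0 < a d) (hD : 1 < #D) :
    StrictMonoOn (tiltedMean D a) (Set.Ioi 0) := by
  have hne : D.Nonempty := Finset.card_pos.mp (by omega)
  intro x (hx : 0 < x) y (hy : 0 < y) hxy
  rw [tiltedMean, tiltedMean,
    div_lt_div_iff₀ (sum_mul_pow_pos hne ha hx) (sum_mul_pow_pos hne ha hy)]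
  have hterm : ∀ d ∈ D, ∀ e ∈ D,
      0 ≤ a d * a e * (((d : ℝ) - e) * (y ^ d * x ^ e - x ^ d * y ^ e)) := fun d hd e he =>
    mul_nonneg (mul_pos (ha d hd) (ha e he)).le (cast_sub_mul_pow_sub_pow_nonneg hx hxy d e)
  have hsum : 0 < ∑ d ∈ D, ∑ e ∈ D,
      a d * a e * (((d : ℝ) - e) * (y ^ d * x ^ e - x ^ d * y ^ e)) := by
    have hmax := D.max'_mem hne
    have hmin := D.min'_mem hne
    have hpos := cast_sub_mul_pow_sub_pow_pos hx hxy (D.min'_lt_max'_of_card hD).ne'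
    refine Finset.sum_pos' (fun d hd => Finset.sum_nonneg (hterm d hd)) ⟨_, hmax, ?_⟩
    exact Finset.sum_pos' (hterm _ hmax)
      ⟨_, hmin, mul_pos (mul_pos (ha _ hmax) (ha _ hmin)) hpos⟩
  linarith [two_mul_cross_sub_eq_sum_sum (D := D) (a := a) x y]

theorem sum_mul_zero_pow_eq {b : ℕ → ℝ} {k : ℕ → ℕ} {d₀ : ℕ} (hd₀ : d₀ ∈ D) (hk₀ : k d₀ = 0)
    (hk : ∀ d ∈ D, d ≠ d₀ → k d ≠ 0) : ∑ d ∈ D, b d * (0 : ℝ) ^ k d = b d₀ := by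
  rw [Finset.sum_eq_single_of_mem d₀ hd₀ fun d hd hne => by simp [zero_pow (hk d hd hne)], hk₀,
    pow_zero, mul_one]

theorem tendsto_ratio_sum_pow_nhds_zero {k : ℕ → ℕ} {d₀ : ℕ} (hd₀ : d₀ ∈ D) (hk₀ : k d₀ = 0)
    (hk : ∀ d ∈ D, d ≠ d₀ → k d ≠ 0) (ha : a d₀ ≠ 0) :
    Tendsto (fun u : ℝ => (∑ d ∈ D, d * a d * u ^ k d) / ∑ d ∈ D, a d * u ^ k d) (𝓝 0)
      (𝓝 d₀) := by
  have hval : (∑ d ∈ D, d * a d * (0 : ℝ) ^ k d) / ∑ d ∈ D, a d * (0 : ℝ) ^ k d = d₀ := by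
    rw [sum_mul_zero_pow_eq hd₀ hk₀ hk, sum_mul_zero_pow_eq hd₀ hk₀ hk, mul_div_assoc,
      div_self ha, mul_one]
  rw [← hval]
  refine ((continuous_finsetSum _ fun d _ => by fun_prop).tendsto 0).div
    ((continuous_finsetSum _ fun d _ => by fun_prop).tendsto 0) ?_
  rwa [sum_mul_zero_pow_eq hd₀ hk₀ hk]

theorem tiltedMean_eq_ratio_of_pow_eq {x c u : ℝ} {k : ℕ → ℕ} (hc : c ≠ 0)
    (h : ∀ d ∈ D, x ^ d = c * u ^ k d) :
    tiltedMean D a x = (∑ d ∈ D, d * a d * u ^ k d) / ∑ d ∈ D, a d * u ^ k d := by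
  have hN : ∑ d ∈ D, d * a d * x ^ d = c * ∑ d ∈ D, d * a d * u ^ k d := by
    rw [Finset.mul_sum]
    exact Finset.sum_congr rfl fun d hd => by rw [h d hd]; ring
  have hS : ∑ d ∈ D, a d * x ^ d = c * ∑ d ∈ D, a d * u ^ k d := by
    rw [Finset.mul_sum]
    exact Finset.sum_congr rfl fun d hd => by rw [h d hd]; ring
  rw [tiltedMean, hN, hS, mul_div_mul_left _ _ hc]

theorem tiltedMean_tendsto_min' (hne : D.Nonempty) (ha : a (D.min' hne) ≠ 0) :
    Tendsto (tiltedMean D a) (𝓝[>] 0) (𝓝 (D.min' hne)) := by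
  set m := D.min' hne
  refine ((tendsto_ratio_sum_pow_nhds_zero (k := fun d => d - m) (D.min'_mem hne) (Nat.sub_self m)
    (fun d hd hdm => by have := D.min'_le d hd; omega) ha).mono_left nhdsWithin_le_nhds).congr' ?_
  filter_upwards [self_mem_nhdsWithin] with x (hx : 0 < x)
  refine (tiltedMean_eq_ratio_of_pow_eq (pow_ne_zero m hx.ne') fun d hd => ?_).symm
  rw [← pow_add, Nat.add_sub_cancel' (D.min'_le d hd)]

theorem tiltedMean_tendsto_max' (hne : D.Nonempty) (ha : a (D.max' hne) ≠ 0) :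
    Tendsto (tiltedMean D a) atTop (𝓝 (D.max' hne)) := by
  set M := D.max' hne
  refine ((tendsto_ratio_sum_pow_nhds_zero (k := fun d => M - d) (D.max'_mem hne) (Nat.sub_self M)
    (fun d hd hdM => by have := D.le_max' d hd; omega) ha).comp tendsto_inv_atTop_zero).congr' ?_
  filter_upwards [eventually_gt_atTop 0] with x (hx : 0 < x)
  refine (tiltedMean_eq_ratio_of_pow_eq (pow_ne_zero M hx.ne') fun d hd => ?_).symm
  rw [inv_pow, eq_mul_inv_iff_mul_eq₀ (by positivity), ← pow_add,
    Nat.add_sub_cancel' (D.le_max' d hd)]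

theorem tiltedMean_continuousOn (hne : D.Nonempty) (ha : ∀ d ∈ D, 0 < a d) :
    ContinuousOn (tiltedMean D a) (Set.Ioi 0) :=
  ContinuousOn.div (by fun_prop) (by fun_prop) fun _ hx => (sum_mul_pow_pos hne ha hx).ne'

end TiltedMean

theorem StrictMonoOn.existsUnique_eq_of_tendsto {f : ℝ → ℝ} {m M : ℝ}
    (hf : StrictMonoOn f (Set.Ioi 0)) (hc : ContinuousOn f (Set.Ioi 0))
    (h₀ : Tendsto f (𝓝[>] 0) (𝓝 m)) (h_top : Tendsto f atTop (𝓝 M)) {t : ℝ} (hmt : m < t)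
    (htM : t < M) : ∃! ζ : ℝ, 0 < ζ ∧ f ζ = t := by
  obtain ⟨ζ, hζ, rfl⟩ := isPreconnected_Ioi.intermediate_value_Ioo
    (le_principal_iff.mpr self_mem_nhdsWithin) (le_principal_iff.mpr (Ioi_mem_atTop 0)) hc h₀ h_top
    ⟨hmt, htM⟩
  exact ⟨ζ, ⟨hζ, rfl⟩, fun y ⟨hy, hyζ⟩ => hf.injOn hy hζ hyζ⟩

/-- For finite `D` with at least two elements, `φ` is strictly increasing on `(0,∞)`,
tends to `min D` as `x → 0⁺` and to `max D` as `x → ∞`; hence for every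
`t ∈ (min D, max D)` there is a unique `ζ > 0` with `φ(ζ) = t`. -/
theorem phiD_strictMono_and_limits (D : Finset ℕ) (hne : D.Nonempty) (hD : 2 ≤ D.card) :
    StrictMonoOn (phiD D) (Set.Ioi 0) ∧
    Filter.Tendsto (phiD D) (nhdsWithin 0 (Set.Ioi 0)) (nhds (D.min' hne : ℝ)) ∧
    Filter.Tendsto (phiD D) Filter.atTop (nhds (D.max' hne : ℝ)) ∧
    ∀ t : ℝ, (D.min' hne : ℝ) < t → t < (D.max' hne : ℝ) →
      ∃! ζ : ℝ, 0 < ζ ∧ phiD D ζ = t := by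
  rw [phiD_eq_tiltedMean]
  set a : ℕ → ℝ := fun d => (d ! : ℝ)⁻¹
  have ha : ∀ d ∈ D, 0 < a d := fun d _ => by positivity
  have hmono := tiltedMean_strictMonoOn ha hD
  have h₀ := tiltedMean_tendsto_min' hne (ha _ (D.min'_mem hne)).ne'
  have h_top := tiltedMean_tendsto_max' hne (ha _ (D.max'_mem hne)).ne'
  exact ⟨hmono, h₀, h_top, fun t hmt htM =>
    hmono.existsUnique_eq_of_tendsto (tiltedMean_continuousOn hne ha) h₀ h_top hmt htM⟩
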